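/- arXiv:1103.5826 — 2 statements merged into one kernel-verified Lean document; each statement's English description precedes it below -/
import Mathlib

section
/- σ̂(3,2,5) + σ̂(13,2,5) + σ̂(53,2,5) = −168, where σ̂(c1,c2,c3) = S_0(c1,c2,c3) − S_1(c1,c2,c3) + S_2(c1,c2,c3). -/
/-- `S c1 c2 c3 t` counts integer triples `(k1,k2,k3)` with `1 ≤ kj ≤ cj - 1` and
`t < k1/c1 + k2/c2 + k3/c3 < t + 1`. -/
noncomputable def S (c1 c2 c3 t : ℕ) : ℕ :=
  ((Finset.Icc (1 : ℤ) ((c1 : ℤ) - 1) ×ˢ Finset.Icc (1 : ℤ) ((c2 : ℤ) - 1) ×ˢ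
      Finset.Icc (1 : ℤ) ((c3 : ℤ) - 1)).filter
    (fun k => (t : ℚ) < (k.1 : ℚ) / c1 + (k.2.1 : ℚ) / c2 + (k.2.2 : ℚ) / c3 ∧
      (k.1 : ℚ) / c1 + (k.2.1 : ℚ) / c2 + (k.2.2 : ℚ) / c3 < (t : ℚ) + 1)).card

/-- `σ̂(c1,c2,c3) = S_0 - S_1 + S_2`, the signature of the Brieskorn singularity
`x^{c1} + y^{c2} + z^{c3} = 0`. -/
noncomputable def sigmaHat (c1 c2 c3 : ℕ) : ℤ :=
  (S c1 c2 c3 0 : ℤ) - (S c1 c2 c3 1 : ℤ) + (S c1 c2 c3 2 : ℤ)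

/-!
Each `S_t` is a finite count, so the identity is a computation. Multiplying the defining
inequalities by `c1 c2 c3` clears denominators and leaves a count of lattice points cut out by
integer inequalities, which is evaluated by `decide`.
-/

def clearedSum (c1 c2 c3 : ℕ) (k : ℤ × ℤ × ℤ) : ℤ :=
  k.1 * (c2 * c3) + k.2.1 * (c1 * c3) + k.2.2 * (c1 * c2)

noncomputable def clearedCount (c1 c2 c3 t : ℕ) : ℕ :=
  ((Finset.Icc (1 : ℤ) ((c1 : ℤ) - 1) ×ˢ Finset.Icc (1 : ℤ) ((c2 : ℤ) - 1) ×ˢ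
      Finset.Icc (1 : ℤ) ((c3 : ℤ) - 1)).filter
    (fun k => (t : ℤ) * (c1 * c2 * c3) < clearedSum c1 c2 c3 k ∧
      clearedSum c1 c2 c3 k < ((t : ℤ) + 1) * (c1 * c2 * c3))).card

variable {c1 c2 c3 : ℕ}

theorem cast_clearedSum (h1 : c1 ≠ 0) (h2 : c2 ≠ 0) (h3 : c3 ≠ 0) (k : ℤ × ℤ × ℤ) :
    (clearedSum c1 c2 c3 k : ℚ) =
      (k.1 / c1 + k.2.1 / c2 + k.2.2 / c3 : ℚ) * (c1 * c2 * c3) := by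
  push_cast [clearedSum]
  field_simp

theorem S_eq_clearedCount (h1 : c1 ≠ 0) (h2 : c2 ≠ 0) (h3 : c3 ≠ 0) (t : ℕ) :
    S c1 c2 c3 t = clearedCount c1 c2 c3 t := by
  have hc : (0 : ℚ) < c1 * c2 * c3 := by positivity
  refine congrArg Finset.card (Finset.filter_congr fun k _ => ?_)
  refine and_congr ?_ ?_ <;>
    rw [← mul_lt_mul_iff_of_pos_right hc, ← cast_clearedSum h1 h2 h3] <;> norm_cast

theorem sigmaHat_eq_clearedCount (h1 : c1 ≠ 0) (h2 : c2 ≠ 0) (h3 : c3 ≠ 0) :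
    sigmaHat c1 c2 c3 = (clearedCount c1 c2 c3 0 : ℤ) - clearedCount c1 c2 c3 1 +
      clearedCount c1 c2 c3 2 := by
  simp only [sigmaHat, S_eq_clearedCount h1 h2 h3]

theorem signature_z5_g1 :
    sigmaHat 3 2 5 + sigmaHat 13 2 5 + sigmaHat 53 2 5 = -168 := by
  simp (disch := norm_num) only [sigmaHat_eq_clearedCount]
  decide +kernel
end

section
/- 6·σ̂(3,2,1) + 3·σ̂(13,2,2) + σ̂(170,3,6) = −940, where σ̂(c1,c2,c3) = S_0(c1,c2,c3) − S_1(c1,c2,c3) + S_2(c1,c2,c3); here σ̂(3,2,1) = 0 since the index range 1 ≤ k3 ≤ 0 is empty, and σ̂(13,2,2) = −12, so equivalently σ̂(170,3,6) = −904. -/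
noncomputable def SInt (c1 c2 c3 t : ℕ) : ℕ :=
  ((Finset.Icc (1 : ℤ) ((c1 : ℤ) - 1) ×ˢ Finset.Icc (1 : ℤ) ((c2 : ℤ) - 1) ×ˢ
      Finset.Icc (1 : ℤ) ((c3 : ℤ) - 1)).filter
    (fun k => (t : ℤ) * (c1 * c2 * c3) < k.1 * (c2 * c3) + k.2.1 * (c1 * c3) + k.2.2 * (c1 * c2) ∧
      k.1 * (c2 * c3) + k.2.1 * (c1 * c3) + k.2.2 * (c1 * c2) < ((t : ℤ) + 1) * (c1 * c2 * c3))).card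

section ClearDenominators

variable {c1 c2 c3 : ℕ}

lemma div_add_div_add_div_eq (h1 : 0 < c1) (h2 : 0 < c2) (h3 : 0 < c3) (a b c : ℤ) :
    (a : ℚ) / c1 + (b : ℚ) / c2 + (c : ℚ) / c3 =
      ((a * (c2 * c3) + b * (c1 * c3) + c * (c1 * c2) : ℤ) : ℚ) / ((c1 * c2 * c3 : ℤ) : ℚ) := by
  field_simp
  push_cast
  ring

theorem S_eq_SInt (h1 : 0 < c1) (h2 : 0 < c2) (h3 : 0 < c3) (t : ℕ) :
    S c1 c2 c3 t = SInt c1 c2 c3 t := by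
  unfold S SInt
  congr 1
  refine Finset.filter_congr fun ⟨a, b, c⟩ _ => ?_
  have hpos : (0 : ℚ) < ((c1 * c2 * c3 : ℤ) : ℚ) := by positivity
  rw [div_add_div_add_div_eq h1 h2 h3, lt_div_iff₀ hpos, div_lt_iff₀ hpos]
  norm_cast

theorem sigmaHat_eq_SInt (h1 : 0 < c1) (h2 : 0 < c2) (h3 : 0 < c3) :
    sigmaHat c1 c2 c3 = (SInt c1 c2 c3 0 : ℤ) - SInt c1 c2 c3 1 + SInt c1 c2 c3 2 := by
  simp only [sigmaHat, S_eq_SInt h1 h2 h3]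

end ClearDenominators

theorem sigmaHat_one_right (c1 c2 : ℕ) : sigmaHat c1 c2 1 = 0 := by
  simp [sigmaHat, S]

theorem sigmaHat_13_2_2 : sigmaHat 13 2 2 = -12 := by
  rw [sigmaHat_eq_SInt (by norm_num) (by norm_num) (by norm_num)]
  decide

set_option maxRecDepth 100000 in
theorem sigmaHat_170_3_6 : sigmaHat 170 3 6 = -904 := by
  rw [sigmaHat_eq_SInt (by norm_num) (by norm_num) (by norm_num)]
  decide

theorem signature_z6_g3 :
    6 * sigmaHat 3 2 1 + 3 * sigmaHat 13 2 2 + sigmaHat 170 3 6 = -940 ∧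
      sigmaHat 3 2 1 = 0 ∧ sigmaHat 13 2 2 = -12 ∧ sigmaHat 170 3 6 = -904 := by
  rw [sigmaHat_one_right, sigmaHat_13_2_2, sigmaHat_170_3_6]
  norm_num
end
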